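/- Let f : ℝ → ℝ (extended by f(x) → −∞ as x ↓ 0 when required below) be non-decreasing and concave on (0,∞), with f(p̂_i) > f(p̂_i − ε) for every i with p̂_i > ε. Fix p̂ ∈ Δ(V) with p̂_1 ≥ … ≥ p̂_d > 0 and assume either (i) p̂_d ≤ ε < p̂_1 and lim_{x↓0} f(x) = −∞, or (ii) 0 < ε < p̂_d and Σ_{i=1}^{d−1} (f(p̂_i) − f(p̂_d + ε)) / (f(p̂_i) − f(p̂_i − ε)) ≥ 1. Set S_I = Σ_{i=1}^{I−1} (f(p̂_i) − f(p̂_I)) / (f(p̂_i) − f(p̂_i − ε)) and Î = max{I : S_I ≤ 1 and p̂_I > ε}. Define q̃ ∈ Δ(V) by q̃_i proportional to ε/(f(p̂_i) − f(p̂_i − ε)) for 1 ≤ i ≤ Î and q̃_i = 0 otherwise. Then q̃ maximizes q ↦ inf_{p ∈ N(p̂)} Σ_i q_i f(p_i) over q ∈ Δ(V): for every q ∈ Δ(V), inf_{p ∈ N(p̂)} Σ_i q_i f(p_i) ≤ inf_{p ∈ N(p̂)} Σ_i q̃_i f(p_i) (infima in the extended reals). -/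

import Mathlib

open Finset

def simplex (d : ℕ) : Set (Fin d → ℝ) := {p | (∀ i, 0 ≤ p i) ∧ ∑ i, p i = 1}

noncomputable def dTV {d : ℕ} (p q : Fin d → ℝ) : ℝ := (∑ i, |p i - q i|) / 2

def nbhd {d : ℕ} (phat : Fin d → ℝ) (ε : ℝ) : Set (Fin d → ℝ) :=
  {p | p ∈ simplex d ∧ dTV p phat ≤ ε}

/-- `f` extended to `[0,∞)` (and below) with value `−∞` for nonpositive arguments. -/
noncomputable def fext (f : ℝ → ℝ) (x : ℝ) : EReal := if x ≤ 0 then ⊥ else ((f x : ℝ) : EReal)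

/-- The extended-real objective `Σ_i q_i f(p_i)` with the convention `0 · (−∞) = 0`. -/
noncomputable def objf {d : ℕ} (f : ℝ → ℝ) (q p : Fin d → ℝ) : EReal :=
  ∑ i, ((q i : ℝ) : EReal) * fext f (p i)

/-!
Write `Δᵢ = f (p̂ᵢ) - f (p̂ᵢ - ε)`, `Z = ∑_{i ≤ Î} 1 / Δᵢ`, and let `V` solve
`∑_{i ≤ Î} (f (p̂ᵢ) - V) / Δᵢ = 1`, i.e. `V = ∑ q̃ᵢ f (p̂ᵢ) - 1 / Z`. Both sides are compared
with `V`.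

`q̃` guarantees `V`: by concavity, taking mass `δᵢ ≤ ε` away from `i` lowers `f (pᵢ)` by at most
`δᵢ Δᵢ / ε`, and as `q̃ᵢ = 1 / (Δᵢ Z)` the total loss is at most `∑ δᵢ / (ε Z) ≤ 1 / Z`.

No `q` guarantees more: if `q` charges some `s` with `p̂ₛ ≤ ε`, the adversary empties `s` and the
objective is `-∞`. Otherwise it moves `ε` onto the last coordinate from the `j` maximising `qⱼ Δⱼ`.
Maximality of `Î` gives `f (p̂ⱼ) < V` for `j > Î`, the case hypotheses give `f (p̂_d + ε) ≤ V`, and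
the weights `(f (p̂ᵢ) - V) / Δᵢ` (nonnegative, summing to one) bound the remaining gain by `qⱼ Δⱼ`.
-/

lemma EReal.coe_finset_sum {α : Type*} (s : Finset α) (g : α → ℝ) :
    ((∑ i ∈ s, g i : ℝ) : EReal) = ∑ i ∈ s, (g i : EReal) :=
  map_sum (⟨⟨Real.toEReal, EReal.coe_zero⟩, EReal.coe_add⟩ : ℝ →+ EReal) g s

lemma objf_eq_coe_sum {d : ℕ} (f : ℝ → ℝ) {q p : Fin d → ℝ} (h : ∀ i, q i ≠ 0 → 0 < p i) :
    objf f q p = ((∑ i, q i * f (p i) : ℝ) : EReal) := by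
  rw [objf, EReal.coe_finset_sum]
  refine Finset.sum_congr rfl fun i _ => ?_
  by_cases hq : q i = 0
  · simp [hq]
  · rw [fext, if_neg (h i hq).not_ge, EReal.coe_mul]

lemma objf_eq_bot {d : ℕ} (f : ℝ → ℝ) {q p : Fin d → ℝ} {s : Fin d} (hq : 0 < q s)
    (hp : p s ≤ 0) : objf f q p = ⊥ := by
  rw [objf, ← Finset.add_sum_erase _ _ (Finset.mem_univ s), fext, if_pos hp,
    EReal.coe_mul_bot_of_pos hq, EReal.bot_add]

lemma sum_posPart_sub_eq_dTV {d : ℕ} {p q : Fin d → ℝ} (h : ∑ i, p i = ∑ i, q i) :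
    ∑ i, (q i - p i)⁺ = dTV p q := by
  have htwo : ∀ x : ℝ, x⁺ = (x + |x|) / 2 := fun x => by
    rw [add_abs_eq_two_nsmul_posPart, nsmul_eq_mul]; ring
  simp only [htwo, dTV, ← Finset.sum_div, Finset.sum_add_distrib, Finset.sum_sub_distrib, h,
    sub_self, zero_add, abs_sub_comm (q _)]

lemma ConcaveOn.sub_div_mul_sub_le {s : Set ℝ} {f : ℝ → ℝ} (hf : ConcaveOn ℝ s f) {a ε δ : ℝ}
    (ha : a ∈ s) (haε : a - ε ∈ s) (hε : 0 < ε) (hδ₀ : 0 ≤ δ) (hδε : δ ≤ ε) :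
    f a - δ / ε * (f a - f (a - ε)) ≤ f (a - δ) := by
  have ht₀ : 0 ≤ δ / ε := div_nonneg hδ₀ hε.le
  have ht₁ : 0 ≤ 1 - δ / ε := sub_nonneg.2 ((div_le_one hε).2 hδε)
  have hconv := hf.2 haε ha ht₀ ht₁ (by ring)
  have hpt : (δ / ε) • (a - ε) + (1 - δ / ε) • a = a - δ := by
    simp only [smul_eq_mul]; field_simp; ring
  rw [hpt, smul_eq_mul, smul_eq_mul] at hconv
  linarith

lemma sub_posPart_div_mul_sub_le {f : ℝ → ℝ} (hmono : MonotoneOn f (Set.Ioi 0))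
    (hconc : ConcaveOn ℝ (Set.Ioi 0) f) {a ε x : ℝ} (hε : 0 < ε) (hεa : ε < a)
    (hx : (a - x)⁺ ≤ ε) :
    f a - (a - x)⁺ / ε * (f a - f (a - ε)) ≤ f x := by
  rcases le_total x a with hxa | hax
  · rw [posPart_eq_self.2 (sub_nonneg.2 hxa)] at hx ⊢
    simpa only [sub_sub_cancel] using hconc.sub_div_mul_sub_le (a := a)
      (Set.mem_Ioi.2 (by linarith)) (Set.mem_Ioi.2 (by linarith)) hε (sub_nonneg.2 hxa) hx
  · rw [posPart_eq_zero.2 (sub_nonpos.2 hax), zero_div, zero_mul, sub_zero]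
    exact hmono (Set.mem_Ioi.2 (by linarith)) (Set.mem_Ioi.2 (by linarith)) hax

section MoveMass

variable {ι : Type*} [DecidableEq ι]

def moveMass (p : ι → ℝ) (i j : ι) (m : ℝ) : ι → ℝ := p - Pi.single i m + Pi.single j m

variable (p : ι → ℝ) {i j : ι} (m : ℝ)

lemma moveMass_apply_src (hij : i ≠ j) : moveMass p i j m i = p i - m := by
  simp [moveMass, hij]

lemma moveMass_apply_dst (hij : i ≠ j) : moveMass p i j m j = p j + m := by
  simp [moveMass, hij.symm]

lemma moveMass_apply_of_ne {k : ι} (hki : k ≠ i) (hkj : k ≠ j) : moveMass p i j m k = p k := by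
  simp [moveMass, hki, hkj]

lemma le_moveMass_apply {k : ι} (hm : 0 ≤ m) (hki : k ≠ i) : p k ≤ moveMass p i j m k := by
  by_cases hkj : k = j
  · subst hkj; rw [moveMass_apply_dst p m (Ne.symm hki)]; linarith
  · rw [moveMass_apply_of_ne p m hki hkj]

variable [Fintype ι]

lemma sum_moveMass : ∑ k, moveMass p i j m k = ∑ k, p k := by
  simp [moveMass, Finset.sum_add_distrib, Finset.sum_sub_distrib]

lemma sum_mul_comp_moveMass (hij : i ≠ j) (q : ι → ℝ) (g : ℝ → ℝ) :
    ∑ k, q k * g (moveMass p i j m k)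
      = ∑ k, q k * g (p k) + q j * (g (p j + m) - g (p j)) - q i * (g (p i) - g (p i - m)) := by
  have hdiff : ∑ k, (q k * g (moveMass p i j m k) - q k * g (p k))
      = q i * (g (p i - m) - g (p i)) + q j * (g (p j + m) - g (p j)) := by
    rw [Fintype.sum_eq_add i j hij fun k hk => by rw [moveMass_apply_of_ne p m hk.1 hk.2, sub_self],
      moveMass_apply_src p m hij, moveMass_apply_dst p m hij]
    ring
  rw [Finset.sum_sub_distrib] at hdiff
  linarith

end MoveMass

lemma dTV_moveMass {d : ℕ} (p : Fin d → ℝ) (m : ℝ) {i j : Fin d} (hij : i ≠ j) :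
    dTV (moveMass p i j m) p = |m| := by
  have hsum : ∑ k, |moveMass p i j m k - p k| = |m| + |m| := by
    rw [Fintype.sum_eq_add i j hij fun k hk => by rw [moveMass_apply_of_ne p m hk.1 hk.2,
      sub_self, abs_zero], moveMass_apply_src p m hij, moveMass_apply_dst p m hij]
    simp
  rw [dTV, hsum]; ring

lemma moveMass_mem_nbhd {d : ℕ} {p : Fin d → ℝ} {ε m : ℝ} {i j : Fin d} (hp : p ∈ simplex d)
    (hij : i ≠ j) (hm₀ : 0 ≤ m) (hmp : m ≤ p i) (hmε : m ≤ ε) : moveMass p i j m ∈ nbhd p ε := by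
  refine ⟨⟨fun k => ?_, by rw [sum_moveMass, hp.2]⟩,
    by rwa [dTV_moveMass p m hij, abs_of_nonneg hm₀]⟩
  by_cases hki : k = i
  · subst hki; rw [moveMass_apply_src p m hij]; linarith
  · exact (hp.1 k).trans (le_moveMass_apply p m hm₀ hki)

namespace DecodingGame

variable {d : ℕ} (f : ℝ → ℝ) (phat : Fin d → ℝ) (ε : ℝ) (Ihat : Fin d)

noncomputable def drop (i : Fin d) : ℝ := f (phat i) - f (phat i - ε)

/-- The `x` solving `∑ i ∈ Iic Ihat, (f (phat i) - x) / drop f phat ε i = 1`. -/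
noncomputable def truncValue : ℝ :=
  (∑ i ∈ Iic Ihat, f (phat i) / drop f phat ε i - 1) / ∑ i ∈ Iic Ihat, (drop f phat ε i)⁻¹

noncomputable def truncWeight (i : Fin d) : ℝ :=
  if i ≤ Ihat then (f (phat i) - truncValue f phat ε Ihat) / drop f phat ε i else 0

variable {f phat ε Ihat}

lemma sum_inv_drop_pos (hdrop : ∀ i ≤ Ihat, 0 < drop f phat ε i) :
    0 < ∑ i ∈ Iic Ihat, (drop f phat ε i)⁻¹ :=
  Finset.sum_pos (fun i hi => inv_pos.2 (hdrop i (Finset.mem_Iic.1 hi))) ⟨Ihat, by simp⟩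

lemma sum_sub_div_drop_eq (hdrop : ∀ i ≤ Ihat, 0 < drop f phat ε i) (x : ℝ) :
    ∑ i ∈ Iic Ihat, (f (phat i) - x) / drop f phat ε i
      = 1 + (truncValue f phat ε Ihat - x) * ∑ i ∈ Iic Ihat, (drop f phat ε i)⁻¹ := by
  have hZ := (sum_inv_drop_pos hdrop).ne'
  simp only [truncValue, sub_mul, div_mul_cancel₀ _ hZ, sub_div, Finset.sum_sub_distrib,
    div_eq_mul_inv x, ← Finset.mul_sum]
  ring

lemma sum_sub_div_drop_le_one_iff (hdrop : ∀ i ≤ Ihat, 0 < drop f phat ε i) (x : ℝ) :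
    ∑ i ∈ Iic Ihat, (f (phat i) - x) / drop f phat ε i ≤ 1 ↔ truncValue f phat ε Ihat ≤ x := by
  have hZ := sum_inv_drop_pos hdrop
  rw [sum_sub_div_drop_eq hdrop, add_le_iff_nonpos_right]
  constructor <;> intro h <;> nlinarith

lemma sum_truncWeight (hdrop : ∀ i ≤ Ihat, 0 < drop f phat ε i) :
    ∑ i, truncWeight f phat ε Ihat i = 1 := by
  simp only [truncWeight]
  rw [← Finset.sum_filter, Finset.filter_ge_eq_Iic, sum_sub_div_drop_eq hdrop,
    sub_self, zero_mul, add_zero]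

lemma truncValue_le_apply (hmono : MonotoneOn f (Set.Ioi 0)) (hpos : ∀ i, 0 < phat i)
    (hanti : Antitone phat) (hdrop : ∀ i ≤ Ihat, 0 < drop f phat ε i)
    (hS : ∑ i ∈ Iio Ihat, (f (phat i) - f (phat Ihat)) / drop f phat ε i ≤ 1)
    {i : Fin d} (hi : i ≤ Ihat) : truncValue f phat ε Ihat ≤ f (phat i) := by
  have hV : truncValue f phat ε Ihat ≤ f (phat Ihat) := by
    rw [← sum_sub_div_drop_le_one_iff hdrop, ← Finset.Iio_insert,
      Finset.sum_insert Finset.notMem_Iio_self, sub_self, zero_div, zero_add]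
    exact hS
  exact hV.trans (hmono (hpos Ihat) (hpos i) (hanti hi))

lemma truncWeight_nonneg (hdrop : ∀ i ≤ Ihat, 0 < drop f phat ε i)
    (hV : ∀ i ≤ Ihat, truncValue f phat ε Ihat ≤ f (phat i)) (i : Fin d) :
    0 ≤ truncWeight f phat ε Ihat i := by
  unfold truncWeight
  split_ifs with hi
  · exact div_nonneg (sub_nonneg.2 (hV i hi)) (hdrop i hi).le
  · exact le_rfl

/-- Maximality of `Ihat` is tested at its successor only: for `Ihat < j`, `f (phat j)` is at most
`f (phat (Ihat + 1))`. -/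
lemma apply_lt_truncValue (hmono : MonotoneOn f (Set.Ioi 0)) (hpos : ∀ i, 0 < phat i)
    (hanti : Antitone phat) (hdrop : ∀ i ≤ Ihat, 0 < drop f phat ε i)
    (hmax : ∀ I : Fin d,
      (∑ i ∈ Iio I, (f (phat i) - f (phat I)) / drop f phat ε i ≤ 1 ∧ ε < phat I) → I ≤ Ihat)
    {j : Fin d} (hj : Ihat < j) (hjε : ε < phat j) : f (phat j) < truncValue f phat ε Ihat := by
  by_contra! hVj
  set I : Fin d := ⟨Ihat + 1, by omega⟩
  have hIj : I ≤ j := Fin.le_def.2 (Nat.succ_le_of_lt hj)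
  have hIio : Iio I = Iic Ihat := by
    ext k; simp only [Finset.mem_Iio, Finset.mem_Iic, Fin.lt_def, Fin.le_def, I]; omega
  have hVI : truncValue f phat ε Ihat ≤ f (phat I) :=
    hVj.trans (hmono (hpos j) (hpos I) (hanti hIj))
  have hIle := hmax I ⟨by rwa [hIio, sum_sub_div_drop_le_one_iff hdrop], hjε.trans_le (hanti hIj)⟩
  exact absurd (Fin.lt_def.2 (Nat.lt_succ_self _)) hIle.not_gt

lemma sub_div_drop_lt_truncWeight {i : Fin d} (hi : 0 < drop f phat ε i)
    (hbelow : Ihat < i → f (phat i) < truncValue f phat ε Ihat) {y : ℝ}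
    (hy : truncValue f phat ε Ihat < y) :
    (f (phat i) - y) / drop f phat ε i < truncWeight f phat ε Ihat i := by
  unfold truncWeight
  split_ifs with hiI
  · exact div_lt_div_of_pos_right (by linarith) hi
  · exact div_neg_of_neg_of_pos (by linarith [hbelow (not_le.1 hiI)]) hi

lemma le_truncValue_of_one_le_sum (hdrop : ∀ i, ε < phat i → 0 < drop f phat ε i)
    (hlarge : ∀ i ≤ Ihat, ε < phat i)
    (hbelow : ∀ j, Ihat < j → ε < phat j → f (phat j) < truncValue f phat ε Ihat)
    (hw : ∀ i, 0 ≤ truncWeight f phat ε Ihat i) {J : Fin d} (hJ : ∀ i < J, ε < phat i) {y : ℝ}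
    (hS : 1 ≤ ∑ i ∈ Iio J, (f (phat i) - y) / drop f phat ε i) :
    y ≤ truncValue f phat ε Ihat := by
  by_contra! hy
  have hne : (Iio J).Nonempty := by
    by_contra! h; rw [h, Finset.sum_empty] at hS; linarith
  have hlt := Finset.sum_lt_sum_of_nonempty hne fun i hi =>
    sub_div_drop_lt_truncWeight (hdrop i (hJ i (Finset.mem_Iio.1 hi)))
      (fun h => hbelow i h (hJ i (Finset.mem_Iio.1 hi))) hy
  have hle : ∑ i ∈ Iio J, truncWeight f phat ε Ihat i ≤ 1 :=
    (Finset.sum_le_univ_sum_of_nonneg hw).trans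
      (sum_truncWeight fun i hi => hdrop i (hlarge i hi)).le
  linarith

lemma truncation_eq_inv_drop {qt : Fin d → ℝ} (hε : 0 < ε)
    (hqt : ∀ i, qt i = if i ≤ Ihat then ε / drop f phat ε i / ∑ k ∈ Iic Ihat, ε / drop f phat ε k
      else 0) (i : Fin d) :
    qt i = if i ≤ Ihat then (drop f phat ε i)⁻¹ / ∑ k ∈ Iic Ihat, (drop f phat ε k)⁻¹ else 0 := by
  simp only [hqt, div_eq_mul_inv ε, ← Finset.mul_sum, mul_div_mul_left _ _ hε.ne']

lemma truncValue_le_iInf_objf (hmono : MonotoneOn f (Set.Ioi 0))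
    (hconc : ConcaveOn ℝ (Set.Ioi 0) f) (hphat : ∑ i, phat i = 1) (hε : 0 < ε)
    (hdrop : ∀ i ≤ Ihat, 0 < drop f phat ε i) (hlarge : ∀ i ≤ Ihat, ε < phat i) {qt : Fin d → ℝ}
    (hqt : ∀ i, qt i = if i ≤ Ihat then ε / drop f phat ε i / ∑ k ∈ Iic Ihat, ε / drop f phat ε k
      else 0) :
    (truncValue f phat ε Ihat : EReal) ≤ ⨅ p ∈ nbhd phat ε, objf f qt p := by
  refine le_iInf₂ fun p ⟨⟨_, hp⟩, hpε⟩ => ?_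
  set Z := ∑ k ∈ Iic Ihat, (drop f phat ε k)⁻¹
  have hZ : 0 < Z := sum_inv_drop_pos hdrop
  have hδ : ∑ i, (phat i - p i)⁺ ≤ ε := by
    rwa [sum_posPart_sub_eq_dTV (hp.trans hphat.symm)]
  have hδi : ∀ i, (phat i - p i)⁺ ≤ ε := fun i =>
    (Finset.single_le_sum (fun k _ => posPart_nonneg (phat k - p k)) (Finset.mem_univ i)).trans hδ
  have hpos : ∀ i ≤ Ihat, 0 < p i := fun i hi => by
    linarith [le_posPart (phat i - p i), hδi i, hlarge i hi]
  have hchord : ∀ i ∈ Iic Ihat,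
      f (phat i) / drop f phat ε i - (phat i - p i)⁺ / ε ≤ (drop f phat ε i)⁻¹ * f (p i) := by
    intro i hi
    have hi := Finset.mem_Iic.1 hi
    have h := sub_posPart_div_mul_sub_le hmono hconc hε (hlarge i hi) (hδi i)
    have hΔ := (hdrop i hi).ne'
    calc f (phat i) / drop f phat ε i - (phat i - p i)⁺ / ε
        = (drop f phat ε i)⁻¹ * (f (phat i) - (phat i - p i)⁺ / ε * drop f phat ε i) := by
          field_simp
      _ ≤ (drop f phat ε i)⁻¹ * f (p i) :=
          mul_le_mul_of_nonneg_left h (inv_nonneg.2 (hdrop i hi).le)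
  have hδI : (∑ i ∈ Iic Ihat, (phat i - p i)⁺) / ε ≤ 1 :=
    (div_le_one hε).2 ((Finset.sum_le_univ_sum_of_nonneg fun i => posPart_nonneg _).trans hδ)
  have hsum : ∑ i, qt i * f (p i) = (∑ i ∈ Iic Ihat, (drop f phat ε i)⁻¹ * f (p i)) / Z := by
    simp only [truncation_eq_inv_drop hε hqt, ite_mul, zero_mul, ← Finset.sum_filter,
      Finset.filter_ge_eq_Iic, Finset.sum_div, div_mul_eq_mul_div, Z]
  have hsupp : ∀ i, qt i ≠ 0 → 0 < p i := fun i hi =>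
    hpos i (by_contra fun h => hi (by simp [truncation_eq_inv_drop hε hqt, h]))
  rw [objf_eq_coe_sum f hsupp, EReal.coe_le_coe_iff, hsum, truncValue]
  gcongr
  have := Finset.sum_le_sum hchord
  rw [Finset.sum_sub_distrib, ← Finset.sum_div] at this
  linarith

lemma mul_sub_truncValue_le_truncWeight_mul {q : Fin d → ℝ} {M : ℝ} {i : Fin d} (hqi : 0 ≤ q i)
    (hdrop : ε < phat i → 0 < drop f phat ε i)
    (hV : i ≤ Ihat → truncValue f phat ε Ihat ≤ f (phat i))
    (hbelow : Ihat < i → ε < phat i → f (phat i) < truncValue f phat ε Ihat)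
    (hw : 0 ≤ truncWeight f phat ε Ihat i) (hsupp : phat i ≤ ε → q i = 0) (hM : 0 ≤ M)
    (hqM : ε < phat i → q i * drop f phat ε i ≤ M) :
    q i * (f (phat i) - truncValue f phat ε Ihat) ≤ truncWeight f phat ε Ihat i * M := by
  rcases le_or_gt (phat i) ε with hiε | hiε
  · rw [hsupp hiε, zero_mul]; exact mul_nonneg hw hM
  unfold truncWeight
  split_ifs with hiI
  · have hΔ := hdrop hiε
    calc q i * (f (phat i) - truncValue f phat ε Ihat)
        = (f (phat i) - truncValue f phat ε Ihat) / drop f phat ε i * (q i * drop f phat ε i) := by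
          field_simp
      _ ≤ _ := mul_le_mul_of_nonneg_left (hqM hiε) (div_nonneg (sub_nonneg.2 (hV hiI)) hΔ.le)
  · rw [zero_mul]
    exact mul_nonpos_of_nonneg_of_nonpos hqi (sub_nonpos.2 (hbelow (not_le.1 hiI) hiε).le)

lemma exists_objf_le_truncValue {q : Fin d → ℝ} (hq : q ∈ simplex d) (hphat : phat ∈ simplex d)
    (hpos : ∀ i, 0 < phat i) (hε : 0 < ε) (hdrop : ∀ i, ε < phat i → 0 < drop f phat ε i)
    (hlarge : ∀ i ≤ Ihat, ε < phat i) (hV : ∀ i ≤ Ihat, truncValue f phat ε Ihat ≤ f (phat i))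
    (hbelow : ∀ j, Ihat < j → ε < phat j → f (phat j) < truncValue f phat ε Ihat)
    (hsupp : ∀ i, phat i ≤ ε → q i = 0) {z j₀ : Fin d} (hj₀ : j₀ ≠ z) (hj₀ε : ε < phat j₀)
    (hz : q z * (f (phat z + ε) - truncValue f phat ε Ihat) ≤ 0) :
    ∃ p ∈ nbhd phat ε, objf f q p ≤ truncValue f phat ε Ihat := by
  set V := truncValue f phat ε Ihat
  have hw := truncWeight_nonneg (fun i hi => hdrop i (hlarge i hi)) hV
  obtain ⟨j, hjs, hjmax⟩ := (univ.filter fun i => i ≠ z ∧ ε < phat i).exists_max_image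
    (fun i => q i * drop f phat ε i) ⟨j₀, by simp [hj₀, hj₀ε]⟩
  simp only [Finset.mem_filter, Finset.mem_univ, true_and] at hjs hjmax
  obtain ⟨hjz, hjε⟩ := hjs
  set M := q j * drop f phat ε j
  have hM : 0 ≤ M := mul_nonneg (hq.1 j) (hdrop j hjε).le
  have hrest : ∑ i ∈ univ.erase z, q i * (f (phat i) - V) ≤ M := calc
    _ ≤ ∑ i ∈ univ.erase z, truncWeight f phat ε Ihat i * M := Finset.sum_le_sum fun i hi =>
        mul_sub_truncValue_le_truncWeight_mul (hq.1 i) (hdrop i) (hV i) (hbelow i) (hw i)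
          (hsupp i) hM fun hiε => hjmax i ⟨Finset.ne_of_mem_erase hi, hiε⟩
    _ = (∑ i ∈ univ.erase z, truncWeight f phat ε Ihat i) * M := (Finset.sum_mul ..).symm
    _ ≤ 1 * M := by
        gcongr
        exact (Finset.sum_le_univ_sum_of_nonneg hw).trans
          (sum_truncWeight fun i hi => hdrop i (hlarge i hi)).le
    _ = M := one_mul M
  have hsplit : ∑ i, q i * f (phat i) - V
      = q z * (f (phat z) - V) + ∑ i ∈ univ.erase z, q i * (f (phat i) - V) := by
    rw [Finset.add_sum_erase _ (fun i => q i * (f (phat i) - V)) (Finset.mem_univ z)]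
    simp only [mul_sub, Finset.sum_sub_distrib, ← Finset.sum_mul, hq.2, one_mul]
  refine ⟨moveMass phat j z ε, moveMass_mem_nbhd hphat hjz hε.le hjε.le le_rfl, ?_⟩
  have hmpos : ∀ k, 0 < moveMass phat j z ε k := fun k => by
    by_cases hkj : k = j
    · subst hkj; rw [moveMass_apply_src phat ε hjz]; linarith
    · exact (hpos k).trans_le (le_moveMass_apply phat ε hε.le hkj)
  rw [objf_eq_coe_sum f fun k _ => hmpos k, EReal.coe_le_coe_iff,
    sum_mul_comp_moveMass phat ε hjz]
  simp only [drop, M] at hrest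
  linarith

lemma iInf_objf_le_truncValue {q : Fin d → ℝ} (hq : q ∈ simplex d) (hphat : phat ∈ simplex d)
    (hpos : ∀ i, 0 < phat i) (hε : 0 < ε) (hdrop : ∀ i, ε < phat i → 0 < drop f phat ε i)
    (hlarge : ∀ i ≤ Ihat, ε < phat i) (hV : ∀ i ≤ Ihat, truncValue f phat ε Ihat ≤ f (phat i))
    (hbelow : ∀ j, Ihat < j → ε < phat j → f (phat j) < truncValue f phat ε Ihat)
    {z j₀ : Fin d} (hj₀ : j₀ ≠ z) (hj₀ε : ε < phat j₀)
    (hz : phat z ≤ ε ∨ f (phat z + ε) ≤ truncValue f phat ε Ihat) :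
    ⨅ p ∈ nbhd phat ε, objf f q p ≤ truncValue f phat ε Ihat := by
  suffices ∃ p ∈ nbhd phat ε, objf f q p ≤ truncValue f phat ε Ihat by
    obtain ⟨p, hp, hle⟩ := this
    exact (iInf₂_le p hp).trans hle
  by_cases hbot : ∃ s, 0 < q s ∧ phat s ≤ ε
  · obtain ⟨s, hqs, hsε⟩ := hbot
    have hs : s ≠ j₀ := fun h => (hsε.trans_lt (h ▸ hj₀ε)).false
    refine ⟨moveMass phat s j₀ (phat s), moveMass_mem_nbhd hphat hs (hpos s).le le_rfl hsε, ?_⟩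
    rw [objf_eq_bot f hqs (by rw [moveMass_apply_src phat _ hs, sub_self])]
    exact bot_le
  push Not at hbot
  have hsupp : ∀ i, phat i ≤ ε → q i = 0 := fun i hiε =>
    (hq.1 i).eq_or_lt.elim Eq.symm fun hqi => absurd (hbot i hqi) hiε.not_gt
  refine exists_objf_le_truncValue hq hphat hpos hε hdrop hlarge hV hbelow hsupp hj₀ hj₀ε ?_
  rcases hz with hzε | hzV
  · rw [hsupp z hzε, zero_mul]
  · exact mul_nonpos_of_nonneg_of_nonpos (hq.1 z) (sub_nonpos.2 hzV)

end DecodingGame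

open DecodingGame

/-- optimality of the generalized truncation strategy `q̃` for the
generalized one-step Decoding Game with objective `f`. -/
theorem stmt2 {d : ℕ} (hd : 0 < d) (f : ℝ → ℝ)
    (hmono : MonotoneOn f (Set.Ioi 0))
    (hconc : ConcaveOn ℝ (Set.Ioi 0) f)
    (phat : Fin d → ℝ) (ε : ℝ)
    (hmem : phat ∈ simplex d)
    (hpos : ∀ i, 0 < phat i)
    (hsort : ∀ i j : Fin d, i ≤ j → phat j ≤ phat i)
    (hgap : ∀ i : Fin d, ε < phat i → f (phat i - ε) < f (phat i))
    (hcase :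
        (phat ⟨d - 1, by omega⟩ ≤ ε ∧ ε < phat ⟨0, hd⟩ ∧
          Filter.Tendsto f (nhdsWithin 0 (Set.Ioi 0)) Filter.atBot)
      ∨ (0 < ε ∧ ε < phat ⟨d - 1, by omega⟩ ∧
          1 ≤ ∑ i ∈ univ.filter (· < (⟨d - 1, by omega⟩ : Fin d)),
            (f (phat i) - f (phat ⟨d - 1, by omega⟩ + ε))
              / (f (phat i) - f (phat i - ε))))
    (Ihat : Fin d)
    (hIhat_cond : (∑ i ∈ univ.filter (· < Ihat),
        (f (phat i) - f (phat Ihat)) / (f (phat i) - f (phat i - ε))) ≤ 1 ∧ ε < phat Ihat)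
    (hIhat_max : ∀ I : Fin d,
        ((∑ i ∈ univ.filter (· < I),
            (f (phat i) - f (phat I)) / (f (phat i) - f (phat i - ε))) ≤ 1 ∧ ε < phat I) →
        I ≤ Ihat)
    (qt : Fin d → ℝ)
    (hqt : ∀ i : Fin d,
        qt i = if i ≤ Ihat then
            (ε / (f (phat i) - f (phat i - ε)))
              / ∑ k ∈ univ.filter (· ≤ Ihat), ε / (f (phat k) - f (phat k - ε))
          else 0) :
    ∀ q ∈ simplex d,
      ⨅ p ∈ nbhd phat ε, objf f q p ≤ ⨅ p ∈ nbhd phat ε, objf f qt p := by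
  intro q hq
  set z : Fin d := ⟨d - 1, by omega⟩
  have hanti : Antitone phat := fun i j hij => hsort i j hij
  have hε : 0 < ε := hcase.elim (fun h => (hpos z).trans_le h.1) (fun h => h.1)
  have hdrop : ∀ i, ε < phat i → 0 < drop f phat ε i := fun i hi => sub_pos.2 (hgap i hi)
  have hlarge : ∀ i ≤ Ihat, ε < phat i := fun i hi => hIhat_cond.2.trans_le (hanti hi)
  have hdropI : ∀ i ≤ Ihat, 0 < drop f phat ε i := fun i hi => hdrop i (hlarge i hi)
  simp only [filter_gt_eq_Iio, filter_ge_eq_Iic] at hcase hIhat_cond hIhat_max hqt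
  have hV : ∀ i ≤ Ihat, truncValue f phat ε Ihat ≤ f (phat i) := fun i =>
    truncValue_le_apply hmono hpos hanti hdropI hIhat_cond.1
  have hbelow : ∀ j, Ihat < j → ε < phat j → f (phat j) < truncValue f phat ε Ihat := fun j =>
    apply_lt_truncValue hmono hpos hanti hdropI hIhat_max
  obtain ⟨j₀, hj₀z, hj₀ε, hz⟩ : ∃ j₀, j₀ ≠ z ∧ ε < phat j₀ ∧
      (phat z ≤ ε ∨ f (phat z + ε) ≤ truncValue f phat ε Ihat) := by
    rcases hcase with ⟨hzε, hε0, -⟩ | ⟨-, hεz, hS⟩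
    · exact ⟨⟨0, hd⟩, fun h => (hzε.trans_lt (h ▸ hε0)).false, hε0, Or.inl hzε⟩
    · obtain ⟨j₀, hj₀⟩ := Finset.nonempty_of_sum_ne_zero (by linarith : _ ≠ (0 : ℝ)) (s := Iio z)
      have hlt : ∀ i < z, ε < phat i := fun i hi => hεz.trans_le (hanti hi.le)
      exact ⟨j₀, (Finset.mem_Iio.1 hj₀).ne, hlt j₀ (Finset.mem_Iio.1 hj₀),
        Or.inr (le_truncValue_of_one_le_sum hdrop hlarge hbelow
          (truncWeight_nonneg hdropI hV) hlt hS)⟩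
  exact (iInf_objf_le_truncValue hq hmem hpos hε hdrop hlarge hV hbelow hj₀z hj₀ε hz).trans
    (truncValue_le_iInf_objf hmono hconc hmem.2 hε hdropI hlarge hqt)
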